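/- arXiv:2105.10594 — 3 statements merged into one kernel-verified Lean document; each statement's English description precedes it below -/
import Mathlib

section
/- The binary symmetric Rényi divergence function r_α(p) = (1/(α-1))·log(p^α(1-p)^{1-α} + (1-p)^α p^{1-α}) is convex on the interval (0,1), for any α > 1. -/
/-!
In the coordinate `v = logit p` the argument `F` of the logarithm satisfies
`F² = (1 + cosh (c v)) / (1 + cosh v)` with `c = 2α - 1`, and `dv/dp = 2 (1 + cosh v)`.
Hence `(α - 1) r_α'(p) = (1 + cosh v) c sinh (c v) / (1 + cosh (c v)) - sinh v`, and convexity
reduces to monotonicity of this function of `v`. Its derivative is nonnegative because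
`cosh v cosh (c v) - c sinh v sinh (c v) ≤ 1` for `c ≥ 1`, which is the convexity of `cosh`
in the form `cosh (t x) - 1 ≤ t (cosh x - 1)` for `t = (c - 1) / (c + 1)`.
-/

noncomputable def ralpha (α p : ℝ) : ℝ :=
  (α - 1)⁻¹ * Real.log (p ^ α * (1 - p) ^ (1 - α) + (1 - p) ^ α * p ^ (1 - α))

open Real Set

theorem Real.cosh_mul_sub_one_le {t : ℝ} (ht₀ : 0 ≤ t) (ht₁ : t ≤ 1) (x : ℝ) :
    cosh (t * x) - 1 ≤ t * (cosh x - 1) := by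
  have hexp (y : ℝ) : exp (t * y) ≤ t * exp y + (1 - t) := by
    simpa [smul_eq_mul] using
      convexOn_exp.2 (mem_univ y) (mem_univ 0) ht₀ (sub_nonneg.2 ht₁) (by ring)
  have h₁ := hexp x
  have h₂ := hexp (-x)
  rw [cosh_eq, cosh_eq, ← mul_neg]
  linarith

theorem Real.cosh_mul_cosh_sub_mul_sinh_mul_sinh_le_one {c : ℝ} (hc : 1 ≤ c) (v : ℝ) :
    cosh v * cosh (c * v) - c * (sinh v * sinh (c * v)) ≤ 1 := by
  have hc₀ : 0 < c + 1 := by linarith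
  have h := cosh_mul_sub_one_le (t := (c - 1) / (c + 1)) (div_nonneg (by linarith) hc₀.le)
    ((div_le_one hc₀).2 (by linarith)) ((c + 1) * v)
  rw [show (c - 1) / (c + 1) * ((c + 1) * v) = c * v - v by field_simp,
    div_mul_eq_mul_div, le_div_iff₀ hc₀, add_mul, one_mul, cosh_add, cosh_sub] at h
  linear_combination h / 2

lemma Real.exp_add_exp_sq (x y : ℝ) :
    (exp x + exp y) ^ 2 = 2 * exp (x + y) * (1 + cosh (x - y)) := by
  rw [cosh_eq, neg_sub, exp_sub, exp_sub, exp_add]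
  field_simp
  ring

lemma Real.one_add_cosh_pos (x : ℝ) : 0 < 1 + cosh x := by linarith [cosh_pos x]

noncomputable def symmRenyiSlope (c v : ℝ) : ℝ :=
  (1 + cosh v) * (c * sinh (c * v) / (1 + cosh (c * v))) - sinh v

lemma hasDerivAt_symmRenyiSlope (c v : ℝ) :
    HasDerivAt (symmRenyiSlope c)
      ((c * (sinh v * sinh (c * v)) + c ^ 2 * (1 + cosh v)) / (1 + cosh (c * v)) - cosh v) v := by
  have hcv : HasDerivAt (fun x => c * x) c v := by simpa using (hasDerivAt_id v).const_mul c
  have hquot : HasDerivAt (fun x => c * sinh (c * x) / (1 + cosh (c * x)))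
      (c ^ 2 / (1 + cosh (c * v))) v := by
    refine (((hcv.sinh).const_mul c).div ((hcv.cosh).const_add 1)
      (one_add_cosh_pos _).ne').congr_deriv ?_
    have := one_add_cosh_pos (c * v)
    field_simp
    linear_combination c ^ 2 * cosh_sq (c * v)
  refine ((((hasDerivAt_cosh v).const_add 1).mul hquot).sub (hasDerivAt_sinh v)).congr_deriv ?_
  ring

lemma monotone_symmRenyiSlope {c : ℝ} (hc : 1 ≤ c) : Monotone (symmRenyiSlope c) := by
  refine monotone_of_deriv_nonneg (fun v => (hasDerivAt_symmRenyiSlope c v).differentiableAt)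
    fun v => ?_
  rw [(hasDerivAt_symmRenyiSlope c v).deriv, sub_nonneg, le_div_iff₀ (one_add_cosh_pos _)]
  have := cosh_mul_cosh_sub_mul_sinh_mul_sinh_le_one hc v
  nlinarith [mul_nonneg (by nlinarith : (0:ℝ) ≤ c ^ 2 - 1) (one_add_cosh_pos v).le]

noncomputable def logit (p : ℝ) : ℝ := log p - log (1 - p)

section Logit

variable {p : ℝ} (hp₀ : 0 < p) (hp₁ : p < 1)
include hp₀ hp₁

lemma hasDerivAt_logit : HasDerivAt logit (p * (1 - p))⁻¹ p := by
  have hq : 1 - p ≠ 0 := by linarith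
  refine ((hasDerivAt_log hp₀.ne').sub
    (((hasDerivAt_id p).const_sub 1).log hq)).congr_deriv ?_
  simp only [id]
  field_simp
  ring

lemma two_mul_mul_one_add_cosh_logit : 2 * p * (1 - p) * (1 + cosh (logit p)) = 1 := by
  have hq : 0 < 1 - p := by linarith
  rw [logit, cosh_eq, exp_sub, neg_sub, exp_sub, exp_log hp₀, exp_log hq]
  field_simp
  ring

lemma rpow_add_rpow_sq_eq (α : ℝ) :
    (p ^ α * (1 - p) ^ (1 - α) + (1 - p) ^ α * p ^ (1 - α)) ^ 2
      = 2 * p * (1 - p) * (1 + cosh ((2 * α - 1) * logit p)) := by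
  have hq : 0 < 1 - p := by linarith
  rw [rpow_def_of_pos hp₀, rpow_def_of_pos hp₀, rpow_def_of_pos hq, rpow_def_of_pos hq,
    ← exp_add, ← exp_add, exp_add_exp_sq, logit, mul_assoc 2 p]
  congr 3
  · rw [show log p * α + log (1 - p) * (1 - α) + (log (1 - p) * α + log p * (1 - α))
      = log p + log (1 - p) by ring, exp_add, exp_log hp₀, exp_log hq]
  · ring

lemma ralpha_eq_log_one_add_cosh_logit (α : ℝ) :
    ralpha α p = (α - 1)⁻¹ *
      ((log (1 + cosh ((2 * α - 1) * logit p)) - log (1 + cosh (logit p))) / 2) := by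
  have hsq : (p ^ α * (1 - p) ^ (1 - α) + (1 - p) ^ α * p ^ (1 - α)) ^ 2
      = (1 + cosh ((2 * α - 1) * logit p)) / (1 + cosh (logit p)) := by
    rw [rpow_add_rpow_sq_eq hp₀ hp₁, eq_div_iff (one_add_cosh_pos _).ne']
    linear_combination
      (1 + cosh ((2 * α - 1) * logit p)) * two_mul_mul_one_add_cosh_logit hp₀ hp₁
  rw [ralpha, ← log_div (one_add_cosh_pos _).ne' (one_add_cosh_pos _).ne', ← hsq, log_pow]
  ring

lemma hasDerivAt_ralpha (α : ℝ) :
    HasDerivAt (ralpha α) ((α - 1)⁻¹ * symmRenyiSlope (2 * α - 1) (logit p)) p := by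
  have hlogit := hasDerivAt_logit hp₀ hp₁
  have hinv : (p * (1 - p))⁻¹ = 2 * (1 + cosh (logit p)) :=
    inv_eq_of_mul_eq_one_right (by linear_combination two_mul_mul_one_add_cosh_logit hp₀ hp₁)
  rw [hinv] at hlogit
  have hlog (c : ℝ) := ((hlogit.const_mul c).cosh.const_add 1).log (one_add_cosh_pos _).ne'
  have hrhs :=
    (((hlog (2 * α - 1)).sub (by simpa using hlog 1)).div_const 2).const_mul (α - 1)⁻¹
  have heq : ralpha α =ᶠ[nhds p] fun x => (α - 1)⁻¹ *
      ((log (1 + cosh ((2 * α - 1) * logit x)) - log (1 + cosh (logit x))) / 2) :=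
    Filter.eventually_of_mem (Ioo_mem_nhds hp₀ hp₁)
      fun x ⟨hx₀, hx₁⟩ => ralpha_eq_log_one_add_cosh_logit hx₀ hx₁ α
  refine (hrhs.congr_deriv ?_).congr_of_eventuallyEq heq
  have := one_add_cosh_pos (logit p)
  rw [symmRenyiSlope]
  field_simp

end Logit

lemma strictMonoOn_logit : StrictMonoOn logit (Ioo 0 1) := by
  intro x ⟨hx₀, _⟩ y ⟨_, hy₁⟩ hxy
  have := log_lt_log hx₀ hxy
  have := log_lt_log (by linarith : 0 < 1 - y) (by linarith : 1 - y < 1 - x)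
  simp only [logit]
  linarith

theorem stmt0 (α : ℝ) (hα : 1 < α) :
    ConvexOn ℝ (Set.Ioo (0:ℝ) 1) (fun p => ralpha α p) := by
  have hderiv (p : ℝ) (hp : p ∈ Ioo (0 : ℝ) 1) := hasDerivAt_ralpha hp.1 hp.2 α
  refine MonotoneOn.convexOn_of_deriv (convex_Ioo 0 1)
    (fun p hp => (hderiv p hp).continuousAt.continuousWithinAt)
    (fun p hp => (hderiv p (interior_subset hp)).differentiableAt.differentiableWithinAt) ?_
  rw [interior_Ioo]
  intro p hp q hq hpq
  rw [(hderiv p hp).deriv, (hderiv q hq).deriv]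
  gcongr
  exact monotone_symmRenyiSlope (by linarith) (strictMonoOn_logit.monotoneOn hp hq hpq)
end

section
/- For α > 1, the function r_α is monotonically decreasing on (0, 1/2]: if 0 < p ≤ q ≤ 1/2 then r_α(p) ≥ r_α(q). -/
open Real Set

noncomputable def renyiTerm (a y : ℝ) : ℝ := y ^ a * (1 - y) ^ (1 - a)

noncomputable def renyiSum (α y : ℝ) : ℝ := renyiTerm α y + renyiTerm (1 - α) y

lemma ralpha_eq_log_renyiSum (α p : ℝ) : ralpha α p = (α - 1)⁻¹ * log (renyiSum α p) := by
  simp only [ralpha, renyiSum, renyiTerm, sub_sub_cancel, mul_comm (p ^ (1 - α))]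

lemma renyiTerm_pos (a : ℝ) {y : ℝ} (hy0 : 0 < y) (hy1 : y < 1) : 0 < renyiTerm a y :=
  mul_pos (rpow_pos_of_pos hy0 a) (rpow_pos_of_pos (sub_pos.2 hy1) _)

lemma renyiSum_pos (α : ℝ) {y : ℝ} (hy0 : 0 < y) (hy1 : y < 1) : 0 < renyiSum α y :=
  add_pos (renyiTerm_pos α hy0 hy1) (renyiTerm_pos (1 - α) hy0 hy1)

lemma hasDerivAt_renyiTerm (a : ℝ) {x : ℝ} (hx0 : 0 < x) (hx1 : x < 1) :
    HasDerivAt (renyiTerm a) (a * (x / (1 - x)) ^ (a - 1) + (a - 1) * (x / (1 - x)) ^ a) x := by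
  have h1x : 0 < 1 - x := sub_pos.2 hx1
  have hpow : HasDerivAt (fun y : ℝ => y ^ a) (a * x ^ (a - 1)) x :=
    hasDerivAt_rpow_const (Or.inl hx0.ne')
  have hpow' : HasDerivAt (fun y : ℝ => (1 - y) ^ (1 - a)) (-1 * (1 - a) * (1 - x) ^ (1 - a - 1)) x :=
    ((hasDerivAt_id x).const_sub 1).rpow_const (Or.inl h1x.ne')
  refine (hpow.mul hpow').congr_deriv ?_
  have hodds (e : ℝ) : (x / (1 - x)) ^ e = x ^ e * (1 - x) ^ (-e) := by
    rw [div_rpow hx0.le h1x.le, rpow_neg h1x.le, div_eq_mul_inv]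
  rw [hodds, hodds, neg_sub, sub_sub_cancel_left]
  ring

noncomputable def renyiSumDeriv (α t : ℝ) : ℝ :=
  α * (t ^ (α - 1) - t ^ (1 - α)) + (α - 1) * (t ^ α - t ^ (-α))

lemma hasDerivAt_renyiSum (α : ℝ) {x : ℝ} (hx0 : 0 < x) (hx1 : x < 1) :
    HasDerivAt (renyiSum α) (renyiSumDeriv α (x / (1 - x))) x := by
  refine ((hasDerivAt_renyiTerm α hx0 hx1).add (hasDerivAt_renyiTerm (1 - α) hx0 hx1)).congr_deriv ?_
  rw [renyiSumDeriv, sub_sub_cancel_left]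
  ring

lemma renyiSumDeriv_nonpos {α t : ℝ} (hα : 1 ≤ α) (ht0 : 0 < t) (ht1 : t ≤ 1) :
    renyiSumDeriv α t ≤ 0 := by
  have h1 : t ^ (α - 1) ≤ t ^ (1 - α) := rpow_le_rpow_of_exponent_ge ht0 ht1 (by linarith)
  have h2 : t ^ α ≤ t ^ (-α) := rpow_le_rpow_of_exponent_ge ht0 ht1 (by linarith)
  have h3 : α * (t ^ (α - 1) - t ^ (1 - α)) ≤ 0 :=
    mul_nonpos_of_nonneg_of_nonpos (by linarith) (sub_nonpos.2 h1)
  have h4 : (α - 1) * (t ^ α - t ^ (-α)) ≤ 0 :=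
    mul_nonpos_of_nonneg_of_nonpos (sub_nonneg.2 hα) (sub_nonpos.2 h2)
  exact add_nonpos h3 h4

lemma antitoneOn_renyiSum {α : ℝ} (hα : 1 ≤ α) : AntitoneOn (renyiSum α) (Ioc 0 (1 / 2)) := by
  refine antitoneOn_of_hasDerivWithinAt_nonpos (convex_Ioc 0 (1 / 2))
    (f' := fun x => renyiSumDeriv α (x / (1 - x))) ?_ ?_ ?_
  · intro x hx
    exact (hasDerivAt_renyiSum α hx.1 (by linarith [hx.2])).continuousAt.continuousWithinAt
  · rw [interior_Ioc]
    intro x hx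
    exact (hasDerivAt_renyiSum α hx.1 (by linarith [hx.2])).hasDerivWithinAt
  · rw [interior_Ioc]
    rintro x ⟨hx0, hx2⟩
    have h1x : 0 < 1 - x := by linarith
    exact renyiSumDeriv_nonpos hα (div_pos hx0 h1x) ((div_le_one h1x).2 (by linarith))

lemma antitoneOn_ralpha {α : ℝ} (hα : 1 ≤ α) : AntitoneOn (ralpha α) (Ioc 0 (1 / 2)) := by
  intro p hp q hq hpq
  rw [ralpha_eq_log_renyiSum, ralpha_eq_log_renyiSum]
  have hlog : log (renyiSum α q) ≤ log (renyiSum α p) :=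
    log_le_log (renyiSum_pos α hq.1 (by linarith [hq.2])) (antitoneOn_renyiSum hα hp hq hpq)
  exact mul_le_mul_of_nonneg_left hlog (inv_nonneg.2 (sub_nonneg.2 hα))

theorem stmt2 (α p q : ℝ) (hα : 1 < α) (hp : 0 < p) (hpq : p ≤ q) (hq : q ≤ 1/2) :
    ralpha α q ≤ ralpha α p :=
  antitoneOn_ralpha hα.le ⟨hp, hpq.trans hq⟩ ⟨hp.trans_le hpq, hq⟩ hpq
end

section
/- Let c ∈ [0, 1/2), p ∈ (0, 1/2], d ≥ 1, and K = exp(-2(1/2-c)²d). Let P = p·δ_{c^d} + (1-p)·δ_{(1-c)^d} and Q = (1-p)·δ_{c^d} + p·δ_{(1-c)^d}. If p + K ≤ 1/2, then R_α(Bern(P), Bern(Q)) ≥ r_α(p + K), for any α > 1. -/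
noncomputable def bern {d : ℕ} (x : Fin d → ℝ) (b : Fin d → Bool) : ℝ :=
  ∏ i, if b i then x i else 1 - x i

noncomputable def renyiD (α : ℝ) {ι : Type*} [Fintype ι] (P Q : ι → ℝ) : ℝ :=
  (α - 1)⁻¹ * Real.log (∑ i, P i ^ α * Q i ^ (1 - α))

/-!
Let `A` be the set of words in `{0,1}^n` with at least `n/2` ones. Each of them has
`Bern(c^n)`-mass at most `(c(1-c))^(n/2)`, so `ε := Bern(c^n)(A) ≤ (2√(c(1-c)))^n ≤ K`, and the
symmetry `b ↦ ¬b` gives `δ := Bern((1-c)^n)(Aᶜ) ≤ ε`. Hence `s := Bern(P)(A) ≥ 1 - (p + K)` and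
`0 < t := Bern(Q)(A) ≤ p + K`. The data-processing inequality for Rényi divergences, applied
first to the partition `{A, Aᶜ}` and then to the affine binary channel sending `(s, t)` to
`(1 - (p + K), p + K)`, bounds `R_α(Bern(P), Bern(Q))` below by the divergence between the coins
of bias `1 - (p + K)` and `p + K`, which is `r_α(p + K)`. The data-processing inequality itself is
Hölder's inequality, applied for each output symbol of the channel.
-/

open Finset Real

lemma mul_rpow_mul_mul_rpow_one_sub {k x y : ℝ} (hk : 0 ≤ k) (hx : 0 ≤ x) (hy : 0 ≤ y) (α : ℝ) :
    (k * x) ^ α * (k * y) ^ (1 - α) = k * (x ^ α * y ^ (1 - α)) := by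
  rcases hk.eq_or_lt with rfl | hk
  · rcases eq_or_ne α 0 with rfl | hα
    · simp
    · simp [zero_rpow hα]
  · rw [mul_rpow hk.le hx, mul_rpow hk.le hy, mul_mul_mul_comm, ← rpow_add hk,
      add_sub_cancel, rpow_one]

section DataProcessing

variable {α : ℝ}

theorem rpow_sum_mul_rpow_sum_le_sum_rpow_mul_rpow {ι : Type*} (s : Finset ι) (hα : 1 ≤ α)
    {f g : ι → ℝ} (hf : ∀ i, 0 ≤ f i) (hg : ∀ i, 0 ≤ g i) (hfg : ∀ i, g i = 0 → f i = 0) :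
    (∑ i ∈ s, f i) ^ α * (∑ i ∈ s, g i) ^ (1 - α) ≤ ∑ i ∈ s, f i ^ α * g i ^ (1 - α) := by
  have hα₀ : α ≠ 0 := by positivity
  have hF : 0 ≤ ∑ i ∈ s, f i := sum_nonneg fun i _ ↦ hf i
  have hS : 0 ≤ ∑ i ∈ s, f i ^ α * g i ^ (1 - α) := sum_nonneg fun i _ ↦ by
    have := hf i; have := hg i; positivity
  have hterm : ∀ i, g i * (f i / g i) = f i ∧ g i * (f i / g i) ^ α = f i ^ α * g i ^ (1 - α) := by
    intro i
    rcases (hg i).eq_or_lt with hgi | hgi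
    · simp [← hgi, hfg i hgi.symm, zero_rpow hα₀]
    · refine ⟨mul_div_cancel₀ _ hgi.ne', ?_⟩
      rw [div_rpow (hf i) hgi.le, rpow_sub hgi, rpow_one]
      field_simp
  have holder := inner_le_weight_mul_Lp_of_nonneg s hα g (fun i ↦ f i / g i) hg
    fun i ↦ div_nonneg (hf i) (hg i)
  simp only [fun i ↦ (hterm i).1, fun i ↦ (hterm i).2] at holder
  rcases hF.eq_or_lt with hF0 | hFpos
  · rwa [← hF0, zero_rpow hα₀, zero_mul]
  have hG : 0 < ∑ i ∈ s, g i := by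
    by_contra! hG
    have hg0 := (sum_eq_zero_iff_of_nonneg fun i _ ↦ hg i).1
      (hG.antisymm (sum_nonneg fun i _ ↦ hg i))
    exact hFpos.ne' (sum_eq_zero fun i hi ↦ hfg i (hg0 i hi))
  calc (∑ i ∈ s, f i) ^ α * (∑ i ∈ s, g i) ^ (1 - α)
      ≤ ((∑ i ∈ s, g i) ^ (1 - α⁻¹) * (∑ i ∈ s, f i ^ α * g i ^ (1 - α)) ^ α⁻¹) ^ α
          * (∑ i ∈ s, g i) ^ (1 - α) := by gcongr
    _ = ∑ i ∈ s, f i ^ α * g i ^ (1 - α) := by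
      rw [mul_rpow (by positivity) (by positivity), ← rpow_mul hG.le, ← rpow_mul hS,
        inv_mul_cancel₀ hα₀, rpow_one, mul_right_comm, ← rpow_add hG]
      rw [show (1 - α⁻¹) * α + (1 - α) = 0 by field_simp; ring, rpow_zero, one_mul]

theorem sum_rpow_mul_rpow_le_of_stochastic {ι κ : Type*} [Fintype ι] [Fintype κ] (hα : 1 ≤ α)
    {K : ι → κ → ℝ} (hK : ∀ i j, 0 ≤ K i j) (hK₁ : ∀ i, ∑ j, K i j = 1)
    {f g : ι → ℝ} (hf : ∀ i, 0 ≤ f i) (hg : ∀ i, 0 ≤ g i) (hfg : ∀ i, g i = 0 → f i = 0) :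
    ∑ j, (∑ i, K i j * f i) ^ α * (∑ i, K i j * g i) ^ (1 - α)
      ≤ ∑ i, f i ^ α * g i ^ (1 - α) := by
  calc ∑ j, (∑ i, K i j * f i) ^ α * (∑ i, K i j * g i) ^ (1 - α)
      ≤ ∑ j, ∑ i, K i j * (f i ^ α * g i ^ (1 - α)) := by
        refine sum_le_sum fun j _ ↦ ?_
        simp_rw [← mul_rpow_mul_mul_rpow_one_sub (hK _ j) (hf _) (hg _)]
        exact rpow_sum_mul_rpow_sum_le_sum_rpow_mul_rpow _ hα (fun i ↦ mul_nonneg (hK i j) (hf i))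
          (fun i ↦ mul_nonneg (hK i j) (hg i))
          fun i h ↦ by rcases mul_eq_zero.1 h with h | h <;> simp [h, hfg]
    _ = ∑ i, f i ^ α * g i ^ (1 - α) := by
      rw [sum_comm]
      simp [← sum_mul, hK₁]

end DataProcessing

def coin (x : ℝ) (b : Bool) : ℝ := if b then x else 1 - x

section Coin

variable {α : ℝ}

@[simp] lemma coin_true (x : ℝ) : coin x true = x := rfl

@[simp] lemma coin_false (x : ℝ) : coin x false = 1 - x := rfl

lemma sum_coin (x : ℝ) : ∑ b, coin x b = 1 := by simp

lemma coin_nonneg {x : ℝ} (hx₀ : 0 ≤ x) (hx₁ : x ≤ 1) (b : Bool) : 0 ≤ coin x b := by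
  cases b <;> simp [hx₀, hx₁]

lemma sum_coin_mul {ι : Type*} [Fintype ι] (x f : ι → ℝ) (hf : ∑ i, f i = 1) (b : Bool) :
    ∑ i, coin (x i) b * f i = coin (∑ i, x i * f i) b := by
  cases b
  · simp [sub_mul, sum_sub_distrib, hf]
  · simp

lemma sum_coin_rpow_le_of_channel {ι : Type*} [Fintype ι] (hα : 1 ≤ α) {x : ι → ℝ}
    (hx₀ : ∀ i, 0 ≤ x i) (hx₁ : ∀ i, x i ≤ 1)
    {f g : ι → ℝ} (hf : ∀ i, 0 ≤ f i) (hg : ∀ i, 0 ≤ g i) (hfg : ∀ i, g i = 0 → f i = 0)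
    (hf₁ : ∑ i, f i = 1) (hg₁ : ∑ i, g i = 1) :
    ∑ b, coin (∑ i, x i * f i) b ^ α * coin (∑ i, x i * g i) b ^ (1 - α)
      ≤ ∑ i, f i ^ α * g i ^ (1 - α) := by
  simp_rw [← sum_coin_mul x f hf₁, ← sum_coin_mul x g hg₁]
  exact sum_rpow_mul_rpow_le_of_stochastic hα (fun i ↦ coin_nonneg (hx₀ i) (hx₁ i))
    (fun i ↦ sum_coin _) hf hg hfg

lemma sum_coin_rpow_le_of_finset {ι : Type*} [Fintype ι] (hα : 1 ≤ α) (A : Finset ι)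
    {f g : ι → ℝ} (hf : ∀ i, 0 ≤ f i) (hg : ∀ i, 0 ≤ g i) (hfg : ∀ i, g i = 0 → f i = 0)
    (hf₁ : ∑ i, f i = 1) (hg₁ : ∑ i, g i = 1) :
    ∑ b, coin (∑ i ∈ A, f i) b ^ α * coin (∑ i ∈ A, g i) b ^ (1 - α)
      ≤ ∑ i, f i ^ α * g i ^ (1 - α) := by
  classical
  simpa [ite_mul, sum_ite_mem] using sum_coin_rpow_le_of_channel hα
    (x := fun i ↦ if i ∈ A then 1 else 0) (fun i ↦ by split_ifs <;> norm_num)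
    (fun i ↦ by split_ifs <;> norm_num) hf hg hfg hf₁ hg₁

lemma sum_coin_rpow_le_of_le (hα : 1 ≤ α) {s t s' t' : ℝ} (ht : 0 < t) (htt' : t ≤ t')
    (ht's' : t' ≤ s') (hs's : s' ≤ s) (hs : s ≤ 1) :
    ∑ b, coin s' b ^ α * coin t' b ^ (1 - α) ≤ ∑ b, coin s b ^ α * coin t b ^ (1 - α) := by
  rcases (htt'.trans (ht's'.trans hs's)).eq_or_lt with hts | hts
  · obtain ⟨rfl, rfl, rfl⟩ : t' = t ∧ s' = t ∧ s = t := ⟨by linarith, by linarith, hts.symm⟩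
    rfl
  -- the affine channel `y ↦ β + r y` sends `s ↦ s'` and `t ↦ t'`
  set r := (s' - t') / (s - t)
  have hr : r * (s - t) = s' - t' := div_mul_cancel₀ _ (sub_pos.2 hts).ne'
  have hr₀ : 0 ≤ r := div_nonneg (by linarith) (by linarith)
  set β := t' - r * t
  have hβ₀ : 0 ≤ β := by nlinarith
  have hβ₁ : β + r ≤ 1 := by nlinarith
  set x : Bool → ℝ := fun i ↦ if i then β + r else β
  have hxs : ∑ i, x i * coin s i = s' := by simp [x, β]; linear_combination hr
  have hxt : ∑ i, x i * coin t i = t' := by simp [x, β]; ring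
  rw [← hxs, ← hxt]
  exact sum_coin_rpow_le_of_channel hα (fun i ↦ by cases i <;> simp [x] <;> linarith)
    (fun i ↦ by cases i <;> simp [x] <;> linarith)
    (coin_nonneg (by linarith) hs) (coin_nonneg ht.le (by linarith))
    (fun i h ↦ by cases i <;> simp at h ⊢ <;> linarith) (sum_coin s) (sum_coin t)

end Coin

section Bern

variable {n : ℕ}

lemma bern_nonneg {x : Fin n → ℝ} (hx₀ : ∀ i, 0 ≤ x i) (hx₁ : ∀ i, x i ≤ 1) (b : Fin n → Bool) :
    0 ≤ bern x b :=
  prod_nonneg fun i _ ↦ by split_ifs <;> linarith [hx₀ i, hx₁ i]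

lemma sum_bern (x : Fin n → ℝ) : ∑ b, bern x b = 1 := by
  simpa [bern] using (Fintype.prod_sum fun i (j : Bool) ↦ if j then x i else 1 - x i).symm

lemma bern_one_sub (x : Fin n → ℝ) (b : Fin n → Bool) :
    bern (fun i ↦ 1 - x i) b = bern x (fun i ↦ !b i) :=
  prod_congr rfl fun i _ ↦ by cases h : b i <;> simp [h]

lemma bern_const (c : ℝ) (b : Fin n → Bool) :
    bern (fun _ ↦ c) b = c ^ #{i | b i} * (1 - c) ^ #{i | ¬b i} := by
  rw [bern, prod_ite, prod_const, prod_const]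

lemma card_filter_true_add_card_filter_false (b : Fin n → Bool) :
    #{i | b i} + #{i | ¬b i} = n := by
  rw [card_filter_add_card_filter_not, card_univ, Fintype.card_fin]

lemma two_mul_sqrt_mul_one_sub_le_exp (c : ℝ) :
    2 * √(c * (1 - c)) ≤ exp (-2 * (1 / 2 - c) ^ 2) := by
  -- `4c(1-c) = 1 - 4(1/2 - c)^2 ≤ exp(-4(1/2 - c)^2)`
  have h : 4 * (c * (1 - c)) ≤ exp (-2 * (1 / 2 - c) ^ 2) ^ 2 := by
    rw [← exp_nat_mul]
    push_cast
    nlinarith [add_one_le_exp (2 * (-2 * (1 / 2 - c) ^ 2))]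
  calc 2 * √(c * (1 - c)) = √(4 * (c * (1 - c))) := by
        rw [sqrt_mul zero_le_four, show (4 : ℝ) = 2 ^ 2 by norm_num, sqrt_sq zero_le_two]
    _ ≤ √(exp (-2 * (1 / 2 - c) ^ 2) ^ 2) := sqrt_le_sqrt h
    _ = exp (-2 * (1 / 2 - c) ^ 2) := sqrt_sq (exp_pos _).le

lemma bern_const_le_sqrt_pow {c : ℝ} (hc₀ : 0 ≤ c) (hc : c ≤ 1 / 2) {b : Fin n → Bool}
    (hb : n ≤ 2 * #{i | b i}) :
    bern (fun _ ↦ c) b ≤ √(c * (1 - c)) ^ n := by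
  have hcard := card_filter_true_add_card_filter_false b
  set k := #{i | b i}
  set m := #{i | ¬b i}
  have hc_le : c ≤ √(c * (1 - c)) := le_sqrt_of_sq_le (by nlinarith)
  have hvar : 0 ≤ c * (1 - c) := by nlinarith
  calc bern (fun _ ↦ c) b = c ^ (k - m) * (c * (1 - c)) ^ m := by
        rw [bern_const, mul_pow, ← mul_assoc, ← pow_add, Nat.sub_add_cancel (by omega)]
    _ ≤ √(c * (1 - c)) ^ (k - m) * (√(c * (1 - c)) ^ 2) ^ m := by
        rw [sq_sqrt hvar]
        gcongr
    _ = √(c * (1 - c)) ^ n := by rw [← pow_mul, ← pow_add]; congr 1; omega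

def majority (n : ℕ) : Finset (Fin n → Bool) := {b | n ≤ 2 * #{i | b i}}

lemma sum_bern_majority_le_exp {c : ℝ} (hc₀ : 0 ≤ c) (hc : c ≤ 1 / 2) :
    ∑ b ∈ majority n, bern (fun _ ↦ c) b ≤ exp (-2 * (1 / 2 - c) ^ 2 * n) := by
  calc ∑ b ∈ majority n, bern (fun _ ↦ c) b
      ≤ ∑ _b : Fin n → Bool, √(c * (1 - c)) ^ n :=
        (sum_le_sum fun _b hb ↦ bern_const_le_sqrt_pow hc₀ hc (mem_filter.1 hb).2).trans
          (sum_le_sum_of_subset_of_nonneg (subset_univ _) fun _ _ _ ↦ by positivity)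
    _ = (2 * √(c * (1 - c))) ^ n := by simp [mul_pow]
    _ ≤ exp (-2 * (1 / 2 - c) ^ 2) ^ n := by
        gcongr
        exact two_mul_sqrt_mul_one_sub_le_exp c
    _ = exp (-2 * (1 / 2 - c) ^ 2 * n) := by rw [← exp_nat_mul, mul_comm]

lemma sum_bern_one_sub_compl_majority_le {c : ℝ} (hc₀ : 0 ≤ c) (hc₁ : c ≤ 1) :
    ∑ b ∈ (majority n)ᶜ, bern (fun _ ↦ 1 - c) b ≤ ∑ b ∈ majority n, bern (fun _ ↦ c) b := by
  have hneg : Function.Injective fun (b : Fin n → Bool) i ↦ !b i :=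
    fun b b' h ↦ funext fun i ↦ by simpa using congrFun h i
  have hmaps : (majority n)ᶜ.image (fun b i ↦ !b i) ⊆ majority n := by
    simp only [subset_iff, mem_image, mem_compl, majority, mem_filter_univ, not_le]
    rintro _ ⟨b, hb, rfl⟩
    have := card_filter_true_add_card_filter_false b
    simp only [Bool.not_eq_true', Bool.not_eq_true] at this ⊢
    omega
  calc ∑ b ∈ (majority n)ᶜ, bern (fun _ ↦ 1 - c) b
      = ∑ b ∈ (majority n)ᶜ.image (fun b i ↦ !b i), bern (fun _ ↦ c) b := by
        rw [sum_image hneg.injOn]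
        exact sum_congr rfl fun b _ ↦ bern_one_sub _ b
    _ ≤ ∑ b ∈ majority n, bern (fun _ ↦ c) b :=
        sum_le_sum_of_subset_of_nonneg hmaps fun b _ _ ↦
          bern_nonneg (fun _ ↦ hc₀) (fun _ ↦ hc₁) b

end Bern

lemma ralpha_eq_renyiD_coin (α q : ℝ) : ralpha α q = renyiD α (coin (1 - q)) (coin q) := by
  simp [ralpha, renyiD, add_comm]

lemma renyiD_le_renyiD_of_sum_le {α : ℝ} (hα : 1 ≤ α) {ι κ : Type*} [Fintype ι] [Fintype κ]
    {P Q : ι → ℝ} {P' Q' : κ → ℝ} (hpos : 0 < ∑ i, P i ^ α * Q i ^ (1 - α))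
    (hle : ∑ i, P i ^ α * Q i ^ (1 - α) ≤ ∑ j, P' j ^ α * Q' j ^ (1 - α)) :
    renyiD α P Q ≤ renyiD α P' Q' :=
  mul_le_mul_of_nonneg_left (log_le_log hpos hle) (inv_nonneg.2 (sub_nonneg.2 hα))

lemma sum_coin_rpow_le_sum_mixture_rpow {α : ℝ} (hα : 1 ≤ α) {ι : Type*} [Fintype ι]
    [DecidableEq ι] {μ ν : ι → ℝ} (hμ₀ : ∀ i, 0 ≤ μ i) (hν₀ : ∀ i, 0 ≤ ν i) (hμ₁ : ∑ i, μ i = 1)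
    (hν₁ : ∑ i, ν i = 1) (A : Finset ι) {p K : ℝ} (hp : 0 < p) (hpK : p + K ≤ 1 / 2)
    (hμA : ∑ i ∈ A, μ i ≤ K) (hνA : ∑ i ∈ Aᶜ, ν i ≤ K) :
    ∑ j, coin (1 - (p + K)) j ^ α * coin (p + K) j ^ (1 - α)
      ≤ ∑ i, (p * μ i + (1 - p) * ν i) ^ α * ((1 - p) * μ i + p * ν i) ^ (1 - α) := by
  set ε := ∑ i ∈ A, μ i
  set δ := ∑ i ∈ Aᶜ, ν i
  have hε₀ : 0 ≤ ε := sum_nonneg fun i _ ↦ hμ₀ i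
  have hδ₀ : 0 ≤ δ := sum_nonneg fun i _ ↦ hν₀ i
  have hνA' : ∑ i ∈ A, ν i = 1 - δ := eq_sub_of_add_eq ((sum_add_sum_compl A ν).trans hν₁)
  have hs : ∑ i ∈ A, (p * μ i + (1 - p) * ν i) = p * ε + (1 - p) * (1 - δ) := by
    rw [sum_add_distrib, ← mul_sum, ← mul_sum, hνA']
  have ht : ∑ i ∈ A, ((1 - p) * μ i + p * ν i) = (1 - p) * ε + p * (1 - δ) := by
    rw [sum_add_distrib, ← mul_sum, ← mul_sum, hνA']
  calc ∑ j, coin (1 - (p + K)) j ^ α * coin (p + K) j ^ (1 - α)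
      ≤ ∑ j, coin (p * ε + (1 - p) * (1 - δ)) j ^ α
          * coin ((1 - p) * ε + p * (1 - δ)) j ^ (1 - α) :=
        sum_coin_rpow_le_of_le hα (by nlinarith) (by nlinarith) (by linarith) (by nlinarith)
          (by nlinarith)
    _ ≤ _ := by
        rw [← hs, ← ht]
        refine sum_coin_rpow_le_of_finset hα A
          (fun i ↦ add_nonneg (mul_nonneg hp.le (hμ₀ i)) (mul_nonneg (by linarith) (hν₀ i)))
          (fun i ↦ add_nonneg (mul_nonneg (by linarith) (hμ₀ i)) (mul_nonneg hp.le (hν₀ i)))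
          (fun i h ↦ ?_) ?_ ?_
        · have hμi : μ i = 0 := by nlinarith [hμ₀ i, hν₀ i]
          have hνi : ν i = 0 := by nlinarith [hμ₀ i, hν₀ i]
          simp [hμi, hνi]
        all_goals rw [sum_add_distrib, ← mul_sum, ← mul_sum, hμ₁, hν₁]; ring

theorem stmt7_general (α : ℝ) (hα : 1 < α) (n : ℕ) (c p : ℝ)
    (hc : 0 ≤ c) (hc2 : c < 1/2) (hp : 0 < p)
    (hK : p + Real.exp (-2 * (1/2 - c)^2 * n) ≤ 1/2) :
    let K := Real.exp (-2 * (1/2 - c)^2 * n)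
    let bp : (Fin n → Bool) → ℝ := fun b =>
      p * bern (fun _ => c) b + (1 - p) * bern (fun _ => 1 - c) b
    let bq : (Fin n → Bool) → ℝ := fun b =>
      (1 - p) * bern (fun _ => c) b + p * bern (fun _ => 1 - c) b
    ralpha α (p + K) ≤ renyiD α bp bq := by
  intro K bp bq
  have hε : ∑ b ∈ majority n, bern (fun _ ↦ c) b ≤ K := sum_bern_majority_le_exp hc hc2.le
  have hδ : ∑ b ∈ (majority n)ᶜ, bern (fun _ ↦ 1 - c) b ≤ K :=
    (sum_bern_one_sub_compl_majority_le hc (by linarith)).trans hε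
  have hq : 0 < 1 - (p + K) := by linarith
  have hpos : 0 < ∑ j, coin (1 - (p + K)) j ^ α * coin (p + K) j ^ (1 - α) := by
    simp only [Fintype.sum_bool, coin_true, coin_false, sub_sub_cancel]
    positivity
  rw [ralpha_eq_renyiD_coin]
  exact renyiD_le_renyiD_of_sum_le hα.le hpos <|
    sum_coin_rpow_le_sum_mixture_rpow hα.le (bern_nonneg (fun _ ↦ hc) (fun _ ↦ by linarith))
      (bern_nonneg (fun _ ↦ by linarith) (fun _ ↦ by linarith)) (sum_bern _) (sum_bern _)
      (majority n) hp hK hε hδ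

theorem stmt7 (α : ℝ) (hα : 1 < α) (n : ℕ) (hn : 1 ≤ n) (c p : ℝ)
    (hc : 0 ≤ c) (hc2 : c < 1/2) (hp : 0 < p) (hp2 : p ≤ 1/2)
    (hK : p + Real.exp (-2 * (1/2 - c)^2 * n) ≤ 1/2) :
    let K := Real.exp (-2 * (1/2 - c)^2 * n)
    let bp : (Fin n → Bool) → ℝ := fun b =>
      p * bern (fun _ => c) b + (1 - p) * bern (fun _ => 1 - c) b
    let bq : (Fin n → Bool) → ℝ := fun b =>
      (1 - p) * bern (fun _ => c) b + p * bern (fun _ => 1 - c) b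
    ralpha α (p + K) ≤ renyiD α bp bq :=
  stmt7_general α hα n c p hc hc2 hp hK
end
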